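/- arXiv:1209.3249 — 7 statements merged into one kernel-verified Lean document; each statement's English description precedes it below -/
import Mathlib

section
/- For F a lifting of a degree-one continuous circle map and 0 ≤ α ≤ ‖F − F_l‖_∞, the water function F_α := (min{F, F_l + α})_u is a well-defined non-decreasing continuous map with F_α(x+1) = F_α(x)+1 for all x; moreover F_0 = F_l, F_{‖F−F_l‖_∞} = F_u, and F_α ≤ F_{α'} whenever α ≤ α'. -/
/-!
Let `G` be a continuous lift with `G (x + 1) = G x + 1`. Since `G - id` is `1`-periodic, every
value `G y` with `y ≤ x` is dominated by a value on `[x - 1, x]`, so `G_u x` is the supremum of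
`G (x + s)` over the compact set `s ∈ [-1, 0]`; this gives continuity of `G_u` and
`G_u (x + 1) = G_u x + 1`. Conjugating by `x ↦ -x` turns `F_l` into an upper envelope, so `F_l` has
the same properties, and then so does `min F (F_l + α)`. Finally `F_l` is monotone, hence its own
upper envelope, and `F - F_l` is continuous and periodic, hence bounded by `‖F - F_l‖_∞`.
-/

noncomputable def lowerLift (F : ℝ → ℝ) (x : ℝ) : ℝ := sInf (F '' Set.Ici x)

noncomputable def upperLift (F : ℝ → ℝ) (x : ℝ) : ℝ := sSup (F '' Set.Iic x)

/-- The sup norm `‖F - F_l‖_∞`. -/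
noncomputable def supDiff (F : ℝ → ℝ) : ℝ := ⨆ x : ℝ, (F x - lowerLift F x)

/-- The water function of level `α`:  `F_α := (min{F, F_l + α})_u`. -/
noncomputable def water (F : ℝ → ℝ) (α : ℝ) : ℝ → ℝ :=
  upperLift (fun y => min (F y) (lowerLift F y + α))

open Set Function

section UpperLift

variable {G : ℝ → ℝ}

theorem periodic_sub_self_of_add_one (h : ∀ x, G (x + 1) = G x + 1) :
    Periodic (fun x => G x - x) 1 := fun x => by
  simp only [h]; ring

theorem exists_mem_Icc_le_of_le (h : ∀ x, G (x + 1) = G x + 1) {x y : ℝ} (hyx : y ≤ x) :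
    ∃ z ∈ Icc (x - 1) x, G y ≤ G z := by
  set n := ⌊x - y⌋
  have hn : (0 : ℝ) ≤ n := by exact_mod_cast Int.floor_nonneg.2 (sub_nonneg.2 hyx)
  have hshift := (periodic_sub_self_of_add_one h).int_mul n y
  simp only [mul_one] at hshift
  exact ⟨y + n, ⟨by linarith [Int.sub_one_lt_floor (x - y)], by linarith [Int.floor_le (x - y)]⟩,
    by linarith⟩

theorem upperLift_eq_sSup_image_Icc (h : ∀ x, G (x + 1) = G x + 1) (x : ℝ) :
    upperLift G x = sSup ((fun s => G (x + s)) '' Icc (-1) 0) := by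
  apply csSup_eq_csSup_of_forall_exists_le
  · rintro _ ⟨y, hy, rfl⟩
    obtain ⟨z, hz, hyz⟩ := exists_mem_Icc_le_of_le h hy
    exact ⟨_, ⟨z - x, ⟨by linarith [hz.1], by linarith [hz.2]⟩, rfl⟩, by simpa using hyz⟩
  · rintro _ ⟨s, hs, rfl⟩
    exact ⟨_, ⟨x + s, mem_Iic.2 (by linarith [hs.2]), rfl⟩, le_rfl⟩

theorem bddAbove_image_Iic (hc : Continuous G) (h : ∀ x, G (x + 1) = G x + 1) (x : ℝ) :
    BddAbove (G '' Iic x) := by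
  obtain ⟨M, hM⟩ := (isCompact_Icc (a := x - 1) (b := x)).bddAbove_image hc.continuousOn
  refine ⟨M, forall_mem_image.2 fun y hy => ?_⟩
  obtain ⟨z, hz, hyz⟩ := exists_mem_Icc_le_of_le h hy
  exact hyz.trans (hM (mem_image_of_mem G hz))

theorem le_upperLift (hc : Continuous G) (h : ∀ x, G (x + 1) = G x + 1) (x : ℝ) :
    G x ≤ upperLift G x :=
  le_csSup (bddAbove_image_Iic hc h x) (mem_image_of_mem G self_mem_Iic)

theorem monotone_upperLift (hc : Continuous G) (h : ∀ x, G (x + 1) = G x + 1) :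
    Monotone (upperLift G) := fun _ b hab =>
  csSup_le_csSup (bddAbove_image_Iic hc h b) ((nonempty_Iic).image G)
    (image_mono (Iic_subset_Iic.2 hab))

theorem continuous_upperLift (hc : Continuous G) (h : ∀ x, G (x + 1) = G x + 1) :
    Continuous (upperLift G) := by
  rw [funext (upperLift_eq_sSup_image_Icc h)]
  exact isCompact_Icc.continuous_sSup (f := fun x s => G (x + s)) (by fun_prop)

theorem upperLift_add_one (hc : Continuous G) (h : ∀ x, G (x + 1) = G x + 1) (x : ℝ) :
    upperLift G (x + 1) = upperLift G x + 1 := by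
  set S := (fun s => G (x + s)) '' Icc (-1) 0
  have hS : (fun s => G (x + 1 + s)) '' Icc (-1) 0 = OrderIso.addRight (1 : ℝ) '' S := by
    rw [image_image]
    congr 1
    funext s
    rw [add_right_comm, h]
    rfl
  rw [upperLift_eq_sSup_image_Icc h, upperLift_eq_sSup_image_Icc h, hS,
    ← OrderIso.map_csSup' _ ((nonempty_Icc.2 (by norm_num)).image _)
      (isCompact_Icc.image (by fun_prop)).bddAbove]
  rfl

theorem upperLift_le_upperLift {G' : ℝ → ℝ} (hG : G ≤ G') (hbdd : ∀ x, BddAbove (G' '' Iic x)) :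
    upperLift G ≤ upperLift G' := fun x =>
  csSup_le ((nonempty_Iic).image G) <| forall_mem_image.2 fun _ hy =>
    (hG _).trans (le_csSup (hbdd x) (mem_image_of_mem G' hy))

theorem upperLift_eq_self_of_monotone (hG : Monotone G) : upperLift G = G :=
  funext fun _ => (hG.map_isGreatest isGreatest_Iic).csSup_eq

end UpperLift

section LowerLift

variable {F : ℝ → ℝ}

theorem lowerLift_eq_neg_upperLift_neg (x : ℝ) :
    lowerLift F x = -upperLift (fun t => -F (-t)) (-x) := by
  rw [lowerLift, upperLift, Real.sInf_def]
  congr 2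
  ext a
  simp only [mem_neg, mem_image, mem_Ici, mem_Iic]
  constructor
  · rintro ⟨y, hy, hFy⟩
    exact ⟨-y, neg_le_neg hy, by rw [neg_neg, hFy, neg_neg]⟩
  · rintro ⟨t, ht, rfl⟩
    exact ⟨-t, le_neg_of_le_neg ht, by rw [neg_neg]⟩

theorem neg_comp_neg_add_one (h : ∀ x, F (x + 1) = F x + 1) (x : ℝ) :
    -F (-(x + 1)) = -F (-x) + 1 := by
  have := h (-(x + 1))
  rw [show -(x + 1) + 1 = -x by ring] at this
  linarith

theorem lowerLift_le (hc : Continuous F) (h : ∀ x, F (x + 1) = F x + 1) (x : ℝ) :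
    lowerLift F x ≤ F x := by
  have := le_upperLift (G := fun t => -F (-t)) (by fun_prop) (neg_comp_neg_add_one h) (-x)
  rw [neg_neg] at this
  rw [lowerLift_eq_neg_upperLift_neg]
  linarith

theorem monotone_lowerLift (hc : Continuous F) (h : ∀ x, F (x + 1) = F x + 1) :
    Monotone (lowerLift F) := fun a b hab => by
  simp only [lowerLift_eq_neg_upperLift_neg]
  exact neg_le_neg (monotone_upperLift (G := fun t => -F (-t)) (by fun_prop) (neg_comp_neg_add_one h) (neg_le_neg hab))

theorem continuous_lowerLift (hc : Continuous F) (h : ∀ x, F (x + 1) = F x + 1) :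
    Continuous (lowerLift F) := by
  rw [funext lowerLift_eq_neg_upperLift_neg]
  exact ((continuous_upperLift (G := fun t => -F (-t)) (by fun_prop) (neg_comp_neg_add_one h)).comp continuous_neg).neg

theorem lowerLift_add_one (hc : Continuous F) (h : ∀ x, F (x + 1) = F x + 1) (x : ℝ) :
    lowerLift F (x + 1) = lowerLift F x + 1 := by
  have := upperLift_add_one (G := fun t => -F (-t)) (by fun_prop) (neg_comp_neg_add_one h) (-(x + 1))
  rw [show -(x + 1) + 1 = -x by ring] at this
  rw [lowerLift_eq_neg_upperLift_neg, lowerLift_eq_neg_upperLift_neg]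
  linarith

end LowerLift

section Water

variable {F : ℝ → ℝ}

theorem continuous_min_lowerLift_add (hc : Continuous F) (h : ∀ x, F (x + 1) = F x + 1)
    (α : ℝ) : Continuous fun y => min (F y) (lowerLift F y + α) :=
  hc.min ((continuous_lowerLift hc h).add continuous_const)

theorem min_lowerLift_add_add_one (hc : Continuous F) (h : ∀ x, F (x + 1) = F x + 1)
    (α x : ℝ) :
    min (F (x + 1)) (lowerLift F (x + 1) + α) = min (F x) (lowerLift F x + α) + 1 := by
  rw [h, lowerLift_add_one hc h, add_right_comm _ 1 α, min_add_add_right]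

theorem monotone_water (hc : Continuous F) (h : ∀ x, F (x + 1) = F x + 1) (α : ℝ) :
    Monotone (water F α) :=
  monotone_upperLift (continuous_min_lowerLift_add hc h α) (min_lowerLift_add_add_one hc h α)

theorem continuous_water (hc : Continuous F) (h : ∀ x, F (x + 1) = F x + 1) (α : ℝ) :
    Continuous (water F α) :=
  continuous_upperLift (continuous_min_lowerLift_add hc h α) (min_lowerLift_add_add_one hc h α)

theorem water_add_one (hc : Continuous F) (h : ∀ x, F (x + 1) = F x + 1) (α x : ℝ) :
    water F α (x + 1) = water F α x + 1 :=
  upperLift_add_one (continuous_min_lowerLift_add hc h α) (min_lowerLift_add_add_one hc h α) x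

theorem water_le_water (hc : Continuous F) (h : ∀ x, F (x + 1) = F x + 1) {α α' : ℝ}
    (hαα' : α ≤ α') : water F α ≤ water F α' :=
  upperLift_le_upperLift (fun _ => min_le_min_left _ (by linarith))
    (bddAbove_image_Iic (continuous_min_lowerLift_add hc h α') (min_lowerLift_add_add_one hc h α'))

theorem water_zero (hc : Continuous F) (h : ∀ x, F (x + 1) = F x + 1) :
    water F 0 = lowerLift F := by
  have hmin : (fun y => min (F y) (lowerLift F y + 0)) = lowerLift F :=
    funext fun y => by rw [add_zero, min_eq_right (lowerLift_le hc h y)]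
  rw [water, hmin, upperLift_eq_self_of_monotone (monotone_lowerLift hc h)]

theorem le_lowerLift_add_supDiff (hc : Continuous F) (h : ∀ x, F (x + 1) = F x + 1) (y : ℝ) :
    F y ≤ lowerLift F y + supDiff F := by
  have hper : Periodic (fun x => F x - lowerLift F x) 1 := fun x => by
    simp only [h, lowerLift_add_one hc h]; ring
  have := le_ciSup
    (hper.compact_of_continuous one_ne_zero (hc.sub (continuous_lowerLift hc h))).bddAbove y
  rw [supDiff]
  linarith

theorem water_eq_upperLift_of_supDiff_le (hc : Continuous F) (h : ∀ x, F (x + 1) = F x + 1)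
    {α : ℝ} (hα : supDiff F ≤ α) : water F α = upperLift F := by
  have hmin : (fun y => min (F y) (lowerLift F y + α)) = F :=
    funext fun y => min_eq_left (by linarith [le_lowerLift_add_supDiff hc h y])
  rw [water, hmin]

end Water

theorem water_props (F : ℝ → ℝ) (hFc : Continuous F)
    (hFd : ∀ x : ℝ, F (x + 1) = F x + 1) :
    (∀ α ∈ Set.Icc 0 (supDiff F),
        Monotone (water F α) ∧ Continuous (water F α) ∧
        ∀ x : ℝ, water F α (x + 1) = water F α x + 1) ∧
    water F 0 = lowerLift F ∧
    water F (supDiff F) = upperLift F ∧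
    (∀ α ∈ Set.Icc 0 (supDiff F), ∀ α' ∈ Set.Icc 0 (supDiff F),
        α ≤ α' → water F α ≤ water F α') :=
  ⟨fun α _ => ⟨monotone_water hFc hFd α, continuous_water hFc hFd α, water_add_one hFc hFd α⟩,
    water_zero hFc hFd, water_eq_upperLift_of_supDiff_le hFc hFd le_rfl,
    fun _ _ _ _ hαα' => water_le_water hFc hFd hαα'⟩
end

section
/- Let F be a lifting of a degree-one continuous circle map and let 0 ≤ α ≤ ‖F − F_l‖_∞. Then the water function F_α coincides with F at every point x in the complement of Con(F_α), where Con(F_α) is the set of points having a neighbourhood on which F_α is constant. -/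
/-- `Con(G)`: the set of points having a neighbourhood on which `G` is constant. -/
def ConSet (G : ℝ → ℝ) : Set ℝ :=
  {x | ∃ U ∈ nhds x, ∀ y ∈ U, G y = G x}

open Set Filter

section DegreeOneLift

variable {F : ℝ → ℝ}

lemma isCompact_range_sub_id_of_lift (hFc : Continuous F)
    (hFd : ∀ x : ℝ, F (x + 1) = F x + 1) : IsCompact (range fun x => F x - x) := by
  have hper : Function.Periodic (fun x => F x - x) 1 := fun x => by simp only [hFd]; ring
  exact hper.compact_of_continuous one_ne_zero (hFc.sub continuous_id)

lemma bddBelow_image_Ici_of_lift (hFc : Continuous F) (hFd : ∀ x : ℝ, F (x + 1) = F x + 1)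
    (t : ℝ) : BddBelow (F '' Ici t) := by
  obtain ⟨b, hb⟩ := (isCompact_range_sub_id_of_lift hFc hFd).bddBelow
  refine ⟨t + b, ?_⟩
  rintro _ ⟨y, hy : t ≤ y, rfl⟩
  linarith [hb ⟨y, rfl⟩]

lemma bddAbove_image_Iic_of_lift (hFc : Continuous F) (hFd : ∀ x : ℝ, F (x + 1) = F x + 1)
    (t : ℝ) : BddAbove (F '' Iic t) := by
  obtain ⟨b, hb⟩ := (isCompact_range_sub_id_of_lift hFc hFd).bddAbove
  refine ⟨t + b, ?_⟩
  rintro _ ⟨y, hy : y ≤ t, rfl⟩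
  linarith [hb ⟨y, rfl⟩]

end DegreeOneLift

section Envelopes

variable {f : ℝ → ℝ} {s t y m : ℝ}

lemma lowerLift_le_s4 (hf : BddBelow (f '' Ici t)) (h : t ≤ y) : lowerLift f t ≤ f y :=
  csInf_le hf ⟨y, h, rfl⟩

lemma le_upperLift_s4 (hf : BddAbove (f '' Iic t)) (h : y ≤ t) : f y ≤ upperLift f t :=
  le_csSup hf ⟨y, h, rfl⟩

lemma lowerLift_mono (hf : ∀ t, BddBelow (f '' Ici t)) : Monotone (lowerLift f) :=
  fun a _ hab => csInf_le_csInf (hf a) (nonempty_Ici.image f) (image_mono (Ici_subset_Ici.2 hab))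

lemma upperLift_mono (hf : ∀ t, BddAbove (f '' Iic t)) : Monotone (upperLift f) :=
  fun _ b hab => csSup_le_csSup (hf b) (nonempty_Iic.image f) (image_mono (Iic_subset_Iic.2 hab))

lemma min_le_lowerLift (hf : BddBelow (f '' Ici t)) (h : ∀ z ∈ Ico s t, m ≤ f z) :
    min m (lowerLift f t) ≤ lowerLift f s := by
  refine le_csInf (nonempty_Ici.image f) ?_
  rintro _ ⟨z, hz : s ≤ z, rfl⟩
  rcases lt_or_ge z t with hzt | hzt
  · exact (min_le_left _ _).trans (h z ⟨hz, hzt⟩)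
  · exact (min_le_right _ _).trans (lowerLift_le_s4 hf hzt)

lemma upperLift_le_max (hf : BddAbove (f '' Iic s)) (h : ∀ z ∈ Ioc s t, f z ≤ m) :
    upperLift f t ≤ max (upperLift f s) m := by
  refine csSup_le (nonempty_Iic.image f) ?_
  rintro _ ⟨z, hz : z ≤ t, rfl⟩
  rcases le_or_gt z s with hzs | hzs
  · exact (le_upperLift_s4 hf hzs).trans (le_max_left _ _)
  · exact (h z ⟨hzs, hz⟩).trans (le_max_right _ _)

end Envelopes

lemma Monotone.mem_conSet {G : ℝ → ℝ} (hG : Monotone G) {x δ : ℝ} (hδ : 0 < δ)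
    (h : G (x + δ) ≤ G (x - δ)) : x ∈ ConSet G := by
  have hconst : ∀ y ∈ Icc (x - δ) (x + δ), G y = G (x - δ) := fun y hy =>
    le_antisymm ((hG hy.2).trans h) (hG hy.1)
  refine ⟨Ioo (x - δ) (x + δ), Ioo_mem_nhds (by linarith) (by linarith), fun y hy => ?_⟩
  rw [hconst y (Ioo_subset_Icc_self hy), hconst x ⟨by linarith, by linarith⟩]

lemma mem_conSet_upperLift {f : ℝ → ℝ} (hf : ∀ t, BddAbove (f '' Iic t)) {x δ m : ℝ}
    (hδ : 0 < δ) (h : ∀ z ∈ Ioc (x - δ) (x + δ), f z ≤ m)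
    (hm : m ≤ upperLift f (x - δ)) : x ∈ ConSet (upperLift f) :=
  (upperLift_mono hf).mem_conSet hδ ((upperLift_le_max (hf _) h).trans (max_le le_rfl hm))

lemma exists_Icc_forall_of_eventually {p : ℝ → Prop} {x : ℝ} (h : ∀ᶠ y in nhds x, p y) :
    ∃ δ > 0, ∀ y ∈ Icc (x - δ) (x + δ), p y := by
  obtain ⟨δ, hδ, hp⟩ := (nhds_basis_Icc_pos x).eventually_iff.1 h
  exact ⟨δ, hδ, fun y hy => hp hy⟩

section Water

variable {F : ℝ → ℝ} {α x : ℝ}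

lemma bddAbove_image_Iic_min (hup : BddAbove (F '' Iic x)) (g : ℝ → ℝ) :
    BddAbove ((fun y => min (F y) (g y)) '' Iic x) := by
  obtain ⟨b, hb⟩ := hup
  exact ⟨b, by rintro _ ⟨y, hy, rfl⟩; exact (min_le_left _ _).trans (hb ⟨y, hy, rfl⟩)⟩

lemma mem_conSet_water_of_lowerLift_add_lt (hFc : Continuous F)
    (hlow : ∀ t, BddBelow (F '' Ici t)) (hup : ∀ t, BddAbove (F '' Iic t))
    (hα : 0 ≤ α) (hx : lowerLift F x + α < F x) : x ∈ ConSet (water F α) := by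
  obtain ⟨m, hlm, hmF⟩ := exists_between hx
  obtain ⟨δ, hδ, hm⟩ :=
    exists_Icc_forall_of_eventually ((hFc.tendsto x).eventually_const_lt hmF)
  have hmono := lowerLift_mono hlow
  have hleft : lowerLift F (x - δ) ≤ lowerLift F x := hmono (by linarith)
  have hright : lowerLift F x ≤ lowerLift F (x + δ) := hmono (by linarith)
  -- on `[x - δ, x + δ)` the values of `F` exceed `m > F_l (x - δ)`, so they do not matter
  -- for the infimum defining `F_l (x - δ)`
  have hfreeze : lowerLift F (x + δ) ≤ lowerLift F (x - δ) := by
    have := min_le_lowerLift (hlow _)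
      fun z (hz : z ∈ Ico (x - δ) (x + δ)) => (hm z ⟨hz.1, hz.2.le⟩).le
    exact (min_le_iff.1 this).resolve_left (by linarith)
  refine mem_conSet_upperLift (fun t => bddAbove_image_Iic_min (hup t) _) hδ
    (m := lowerLift F x + α) (fun z hz => ?_) ?_
  · have : lowerLift F z ≤ lowerLift F (x + δ) := hmono hz.2
    exact (min_le_right _ _).trans (by linarith)
  · refine le_trans ?_ (le_upperLift_s4 (bddAbove_image_Iic_min (hup _) _) le_rfl)
    have := hm (x - δ) ⟨le_rfl, by linarith⟩
    exact le_min (by linarith) (by linarith)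

lemma mem_conSet_water_of_lt_water (hFc : Continuous F) (hup : ∀ t, BddAbove (F '' Iic t))
    (hx : F x < water F α x) : x ∈ ConSet (water F α) := by
  have hbdd := fun t => bddAbove_image_Iic_min (hup t) (fun y => lowerLift F y + α)
  obtain ⟨m, hFm, hmW⟩ := exists_between hx
  obtain ⟨δ, hδ, hm⟩ :=
    exists_Icc_forall_of_eventually ((hFc.tendsto x).eventually_lt_const hFm)
  have hG : ∀ z ∈ Icc (x - δ) (x + δ), min (F z) (lowerLift F z + α) ≤ m := fun z hz =>
    (min_le_left _ _).trans (hm z hz).le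
  have hback : water F α x ≤ water F α (x - δ) := by
    have := upperLift_le_max (hbdd (x - δ)) (t := x)
      fun z hz => hG z ⟨hz.1.le, by linarith [hz.2]⟩
    exact (le_max_iff.1 this).resolve_right (not_le.2 hmW)
  have hmW' : m ≤ water F α (x - δ) := by linarith
  exact mem_conSet_upperLift hbdd hδ (fun z hz => hG z (Ioc_subset_Icc_self hz)) hmW'

end Water

theorem water_eq_outside_con (F : ℝ → ℝ) (hFc : Continuous F)
    (hFd : ∀ x : ℝ, F (x + 1) = F x + 1)
    (α : ℝ) (hα : α ∈ Set.Icc 0 (supDiff F)) :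
    ∀ x : ℝ, x ∉ ConSet (water F α) → water F α x = F x := by
  intro x hx
  have hlow := bddBelow_image_Ici_of_lift hFc hFd
  have hup := bddAbove_image_Iic_of_lift hFc hFd
  have hFl : F x ≤ lowerLift F x + α :=
    not_lt.1 fun h => hx (mem_conSet_water_of_lowerLift_add_lt hFc hlow hup hα.1 h)
  have hFw : water F α x ≤ F x :=
    not_lt.1 fun h => hx (mem_conSet_water_of_lt_water hFc hup h)
  refine le_antisymm hFw ?_
  calc F x = min (F x) (lowerLift F x + α) := (min_eq_left hFl).symm
    _ ≤ water F α x :=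
      le_upperLift_s4 (bddAbove_image_Iic_min (hup x) fun y => lowerLift F y + α) le_rfl
end

section
/- If F is a non-decreasing continuous map with F(x+1) = F(x)+1 for all x, then for every x ∈ ℝ the limit ρ(F) := lim_{n→∞} (Fⁿ(x) − x)/n exists and is independent of x. -/
open Filter

theorem rotation_number_exists_general (F : ℝ → ℝ)
    (hFm : Monotone F) (hFd : ∀ x : ℝ, F (x + 1) = F x + 1) :
    ∃ ρ : ℝ, ∀ x : ℝ,
      Tendsto (fun n : ℕ => (F^[n] x - x) / n) atTop (nhds ρ) := by
  let f : CircleDeg1Lift := ⟨⟨F, hFm⟩, hFd⟩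
  refine ⟨f.translationNumber, fun x => (f.tendsto_translationNumber x).congr fun n => ?_⟩
  rw [CircleDeg1Lift.coe_pow]
  rfl

theorem rotation_number_exists (F : ℝ → ℝ) (hFc : Continuous F)
    (hFm : Monotone F) (hFd : ∀ x : ℝ, F (x + 1) = F x + 1) :
    ∃ ρ : ℝ, ∀ x : ℝ,
      Tendsto (fun n : ℕ => (F^[n] x - x) / n) atTop (nhds ρ) :=
  rotation_number_exists_general F hFm hFd
end

section
/- The rotation number map F ↦ ρ(F), defined on the set of non-decreasing continuous maps F : ℝ → ℝ with F(x+1) = F(x)+1 (equipped with the sup-metric), is continuous and monotone: if F ≤ G pointwise then ρ(F) ≤ ρ(G). -/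
/-!
The rotation number of such a map is the translation number `τ` of the corresponding
`CircleDeg1Lift`, and `τ` is monotone. Since `|fⁿ(0) - n τ(f)| ≤ 1` for every `n`, we get
`n |τ f - τ g| ≤ |fⁿ(0) - gⁿ(0)| + 2`. For a fixed large `n`, the point `gⁿ(0)` depends
continuously on `g` in the sup-metric (only continuity of `f` at the points `fᵏ(0)` is involved),
so `|τ f - τ g| < 3 / n` once `g` is close enough to `f`.
-/

open Filter Topology

theorem Continuous.exists_forall_dist_iterate_lt {α : Type*} [PseudoMetricSpace α] {F : α → α}
    (hF : Continuous F) (x : α) (n : ℕ) {ε : ℝ} (hε : 0 < ε) :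
    ∃ δ > 0, ∀ G : α → α, (∀ y, dist (F y) (G y) ≤ δ) → dist (F^[n] x) (G^[n] x) < ε := by
  induction n generalizing ε with
  | zero => exact ⟨1, one_pos, fun G _ => by simpa using hε⟩
  | succ n ih =>
    obtain ⟨η, hη, hFη⟩ := Metric.continuous_iff.1 hF (F^[n] x) (ε / 2) (half_pos hε)
    obtain ⟨δ, hδ, hδG⟩ := ih (lt_min hη (half_pos hε))
    refine ⟨min δ (ε / 2), lt_min hδ (half_pos hε), fun G hG => ?_⟩
    have hn : dist (G^[n] x) (F^[n] x) < η :=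
      dist_comm (F^[n] x) _ ▸ (hδG G fun y => (hG y).trans (min_le_left _ _)).trans_le
        (min_le_left _ _)
    rw [Function.iterate_succ_apply', Function.iterate_succ_apply']
    calc dist (F (F^[n] x)) (G (G^[n] x))
        ≤ dist (F (G^[n] x)) (F (F^[n] x)) + dist (F (G^[n] x)) (G (G^[n] x)) :=
          dist_triangle_left _ _ _
      _ < ε / 2 + ε / 2 := add_lt_add_of_lt_of_le (hFη _ hn) ((hG _).trans (min_le_right _ _))
      _ = ε := add_halves ε

namespace CircleDeg1Lift

theorem exists_coe_eq_translationNumber_eq {F : ℝ → ℝ} (hm : Monotone F)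
    (hd : ∀ x, F (x + 1) = F x + 1) {x ρ : ℝ}
    (hρ : Tendsto (fun n : ℕ => (F^[n] x - x) / n) atTop (𝓝 ρ)) :
    ∃ f : CircleDeg1Lift, ⇑f = F ∧ f.translationNumber = ρ := by
  refine ⟨⟨⟨F, hm⟩, hd⟩, rfl, tendsto_nhds_unique (tendsto_translationNumber _ x) ?_⟩
  simp only [coe_pow]
  exact hρ

theorem mul_dist_translationNumber_le (f g : CircleDeg1Lift) (n : ℕ) :
    n * dist f.translationNumber g.translationNumber ≤ dist (f^[n] 0) (g^[n] 0) + 2 := by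
  have hf := f.dist_pow_map_zero_mul_translationNumber_le n
  have hg := g.dist_pow_map_zero_mul_translationNumber_le n
  rw [coe_pow] at hf hg
  calc (n : ℝ) * dist f.translationNumber g.translationNumber
      = dist (n * f.translationNumber) (n * g.translationNumber) := by
        rw [Real.dist_eq, Real.dist_eq, ← mul_sub, abs_mul, Nat.abs_cast]
    _ ≤ dist (n * f.translationNumber) (f^[n] 0) + dist (f^[n] 0) (g^[n] 0)
          + dist (g^[n] 0) (n * g.translationNumber) := dist_triangle4 _ _ _ _
    _ ≤ 1 + dist (f^[n] 0) (g^[n] 0) + 1 := by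
        rw [dist_comm] at hf
        gcongr
    _ = dist (f^[n] 0) (g^[n] 0) + 2 := by ring

end CircleDeg1Lift

theorem rotation_number_continuous_and_monotone (F : ℝ → ℝ)
    (hFc : Continuous F) (hFm : Monotone F)
    (hFd : ∀ x : ℝ, F (x + 1) = F x + 1) (ρF : ℝ)
    (hρF : ∀ x : ℝ, Tendsto (fun n : ℕ => (F^[n] x - x) / n) atTop (nhds ρF)) :
    (∀ G : ℝ → ℝ, ∀ ρG : ℝ, Continuous G → Monotone G →
        (∀ x : ℝ, G (x + 1) = G x + 1) →
        (∀ x : ℝ, Tendsto (fun n : ℕ => (G^[n] x - x) / n) atTop (nhds ρG)) →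
        F ≤ G → ρF ≤ ρG) ∧
    (∀ ε > (0 : ℝ), ∃ δ > (0 : ℝ), ∀ G : ℝ → ℝ, ∀ ρG : ℝ,
        Continuous G → Monotone G → (∀ x : ℝ, G (x + 1) = G x + 1) →
        (∀ x : ℝ, Tendsto (fun n : ℕ => (G^[n] x - x) / n) atTop (nhds ρG)) →
        (∀ x : ℝ, |F x - G x| ≤ δ) → |ρF - ρG| ≤ ε) := by
  obtain ⟨f, rfl, rfl⟩ := CircleDeg1Lift.exists_coe_eq_translationNumber_eq hFm hFd (hρF 0)
  refine ⟨fun G ρG _ hGm hGd hρG hfG => ?_, fun ε hε => ?_⟩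
  · obtain ⟨g, rfl, rfl⟩ := CircleDeg1Lift.exists_coe_eq_translationNumber_eq hGm hGd (hρG 0)
    exact CircleDeg1Lift.translationNumber_mono hfG
  · obtain ⟨n, hn⟩ := exists_nat_gt (3 / ε)
    obtain ⟨δ, hδ, hδG⟩ := hFc.exists_forall_dist_iterate_lt 0 n one_pos
    refine ⟨δ, hδ, fun G ρG _ hGm hGd hρG hfG => ?_⟩
    obtain ⟨g, rfl, rfl⟩ := CircleDeg1Lift.exists_coe_eq_translationNumber_eq hGm hGd (hρG 0)
    have hiter := hδG g fun y => (Real.dist_eq _ _).trans_le (hfG y)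
    have hτ := f.mul_dist_translationNumber_le g n
    rw [div_lt_iff₀ hε] at hn
    rw [← Real.dist_eq]
    nlinarith [dist_nonneg (x := f.translationNumber) (y := g.translationNumber)]
end

section
/- Let f : S¹ → S¹ be continuous without periodic points, μ an f-invariant probability measure, θ ∈ supp(μ), and define A₀ = {θ}, A_{i} = f⁻¹(A_{i−1}) ∩ supp(μ). Then the sets A_i are pairwise disjoint. -/
/-! A point of `A i` reaches `θ` after exactly `i` steps, so a point of `A i ∩ A j` with `i < j`
would make `θ` periodic of period `j - i`. -/

open MeasureTheory

/-- The (topological) support of a measure. -/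
def measSupp (μ : Measure (AddCircle (1 : ℝ))) : Set (AddCircle (1 : ℝ)) :=
  {θ | ∀ U : Set (AddCircle (1 : ℝ)), IsOpen U → θ ∈ U → 0 < μ U}

open Function Set

section

variable {α : Type*} {f : α → α}

theorem Set.mapsTo_iterate_of_subset_preimage {A : ℕ → Set α}
    (hA : ∀ i, A (i + 1) ⊆ f ⁻¹' A i) (i : ℕ) : MapsTo f^[i] (A i) (A 0) := by
  induction i with
  | zero => exact mapsTo_id _
  | succ i ih => exact ih.comp (fun x hx => hA i hx)

theorem Function.isPeriodicPt_sub_of_iterate_eq {x y : α} {i j : ℕ} (hij : i ≤ j)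
    (hi : f^[i] x = y) (hj : f^[j] x = y) : IsPeriodicPt f (j - i) y := by
  subst hi
  rw [IsPeriodicPt, IsFixedPt, ← iterate_add_apply, Nat.sub_add_cancel hij, hj]

theorem pairwise_disjoint_of_subset_preimage {θ : α} {A : ℕ → Set α}
    (hθ : ∀ n, 0 < n → ¬IsPeriodicPt f n θ) (hA0 : A 0 ⊆ {θ})
    (hA : ∀ i, A (i + 1) ⊆ f ⁻¹' A i) : Pairwise (Disjoint on A) := by
  have hreach : ∀ i, ∀ x ∈ A i, f^[i] x = θ := fun i x hx =>
    hA0 (mapsTo_iterate_of_subset_preimage hA i hx)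
  refine (pairwise_disjoint_on A).mpr fun i j hij => disjoint_left.mpr fun x hxi hxj => ?_
  exact hθ (j - i) (Nat.sub_pos_of_lt hij)
    (isPeriodicPt_sub_of_iterate_eq hij.le (hreach i x hxi) (hreach j x hxj))

end

theorem preimage_sets_pairwise_disjoint_general
    (f : AddCircle (1 : ℝ) → AddCircle (1 : ℝ))
    (hnoper : ¬ ∃ (θ : AddCircle (1 : ℝ)) (n : ℕ), 1 ≤ n ∧ f^[n] θ = θ)
    (μ : Measure (AddCircle (1 : ℝ)))
    (θ : AddCircle (1 : ℝ))
    (A : ℕ → Set (AddCircle (1 : ℝ)))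
    (hA0 : A 0 = {θ})
    (hAsucc : ∀ i : ℕ, A (i + 1) = f ⁻¹' (A i) ∩ measSupp μ) :
    ∀ i j : ℕ, i ≠ j → Disjoint (A i) (A j) :=
  pairwise_disjoint_of_subset_preimage (fun n hn hper => hnoper ⟨θ, n, hn, hper⟩) hA0.subset
    fun i => (hAsucc i).trans_subset inter_subset_left

theorem preimage_sets_pairwise_disjoint
    (f : AddCircle (1 : ℝ) → AddCircle (1 : ℝ)) (hf : Continuous f)
    (hnoper : ¬ ∃ (θ : AddCircle (1 : ℝ)) (n : ℕ), 1 ≤ n ∧ f^[n] θ = θ)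
    (μ : Measure (AddCircle (1 : ℝ))) [IsProbabilityMeasure μ]
    (hinv : ∀ A : Set (AddCircle (1 : ℝ)), MeasurableSet A → μ (f ⁻¹' A) = μ A)
    (θ : AddCircle (1 : ℝ)) (hθ : θ ∈ measSupp μ)
    (A : ℕ → Set (AddCircle (1 : ℝ)))
    (hA0 : A 0 = {θ})
    (hAsucc : ∀ i : ℕ, A (i + 1) = f ⁻¹' (A i) ∩ measSupp μ) :
    ∀ i j : ℕ, i ≠ j → Disjoint (A i) (A j) :=
  preimage_sets_pairwise_disjoint_general f hnoper μ θ A hA0 hAsucc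
end

section
/- Let f be a continuous degree-one circle map with non-decreasing lifting F, ρ(F) irrational, and h a non-decreasing continuous semiconjugacy of f to R_{ρ(F)}. Let P be the unique minimal set of f and define 𝒰 to be P minus the union over boundary points θ of complementary intervals of P of all sets ∪_{n≥0} Orb⁻_f(fⁿ(θ)) ∩ P. Then h restricted to 𝒰 is injective. -/
open Filter

/-- The backward orbit `Orb⁻_f(θ) = ∪_{m ≥ 0} f⁻ᵐ({θ})`. -/
def backOrbit (f : AddCircle (1 : ℝ) → AddCircle (1 : ℝ)) (θ : AddCircle (1 : ℝ)) :
    Set (AddCircle (1 : ℝ)) :=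
  ⋃ m : ℕ, f^[m] ⁻¹' {θ}

/-- The set `P̃` of endpoints of the connected components of the complement of `P`. -/
def endpointsSet (P : Set (AddCircle (1 : ℝ))) : Set (AddCircle (1 : ℝ)) :=
  {θ | ∃ c ∉ P, θ ∈ closure (connectedComponentIn Pᶜ c) ∧
        θ ∉ connectedComponentIn Pᶜ c}

/-- The removed set `𝒰ᶜ := (∪_{θ ∈ P̃} ∪_{n ≥ 0} Orb⁻_f(fⁿ(θ))) ∩ P`. -/
def removedSet (f : AddCircle (1 : ℝ) → AddCircle (1 : ℝ)) (P : Set (AddCircle (1 : ℝ))) :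
    Set (AddCircle (1 : ℝ)) :=
  (⋃ θ ∈ endpointsSet P, ⋃ n : ℕ, backOrbit f (f^[n] θ)) ∩ P

/-!
Lift `h` to `H`. Since `H` has degree one, `h` is injective on `𝒰` as soon as `H` is strictly
increasing on the lifts of `𝒰`. If instead `H a = H b` with `a < b`, then `h` is constant on the arc
`[a, b]`. A point of `P` inside this arc is recurrent by minimality, so some `f^[n+1]` brings it
back into the arc, whereas `h` moves it by `(n+1)ρ ≠ 0`. Hence the open arc misses `P`, and `a` is
an endpoint of a gap of `P`, so it lies in `𝒰ᶜ`.
-/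

open Set Function

local notation "𝕋" => AddCircle (1 : ℝ)

theorem AddCircle.nsmul_coe_ne_zero_of_irrational {p : ℝ} [Fact (0 < p)] {ρ : ℝ}
    (hρ : Irrational (ρ / p)) {n : ℕ} (hn : n ≠ 0) : n • (ρ : AddCircle p) ≠ 0 := by
  have hinf : ¬IsOfFinAddOrder (ρ : AddCircle p) :=
    AddCircle.not_isOfFinAddOrder_iff_forall_rat_ne_div.mpr fun q hq => hρ ⟨q, hq⟩
  exact fun h0 => hinf (isOfFinAddOrder_iff_nsmul_eq_zero.mpr ⟨n, Nat.pos_of_ne_zero hn, h0⟩)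

theorem Function.Semiconj.apply_iterate_ne_of_irrational {X : Type*} {p : ℝ} [Fact (0 < p)]
    {f : X → X} {h : X → AddCircle p} {ρ : ℝ} (hsemi : Semiconj h f (· + (ρ : AddCircle p)))
    (hρ : Irrational (ρ / p)) {n : ℕ} (hn : n ≠ 0) (x : X) : h (f^[n] x) ≠ h x := by
  rw [hsemi.iterate_right n x, add_right_iterate_apply, Ne, add_eq_left]
  exact AddCircle.nsmul_coe_ne_zero_of_irrational hρ hn

theorem mem_closure_range_iterate_succ {X : Type*} [TopologicalSpace X] {f : X → X}
    (hf : Continuous f) {p q : X} (hq : q ∈ closure (range fun n => f^[n] p)) (hqp : f q = p) :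
    p ∈ closure (range fun n => f^[n + 1] p) := by
  have hrange : f '' range (fun n => f^[n] p) = range fun n => f^[n + 1] p := by
    rw [← range_comp]
    exact congrArg range (funext fun n => (iterate_succ_apply' f n p).symm)
  have hfq := image_closure_subset_closure_image hf (mem_image_of_mem f hq)
  rwa [hqp, hrange] at hfq

theorem coe_mem_endpointsSet_of_forall_Ioo_notMem {P : Set 𝕋} {a b : ℝ} (hab : a < b)
    (hgap : ∀ y ∈ Ioo a b, (y : 𝕋) ∉ P) (ha : (a : 𝕋) ∈ P) : (a : 𝕋) ∈ endpointsSet P := by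
  have hcoe : Continuous ((↑) : ℝ → 𝕋) := AddCircle.continuous_mk' 1
  let c : 𝕋 := ↑((a + b) / 2)
  have hgapP : (↑) '' Ioo a b ⊆ Pᶜ := by
    rintro _ ⟨y, hy, rfl⟩
    exact hgap y hy
  have hc : c ∈ (↑) '' Ioo a b := ⟨(a + b) / 2, ⟨by linarith, by linarith⟩, rfl⟩
  have hsub : (↑) '' Ioo a b ⊆ connectedComponentIn Pᶜ c :=
    (isPreconnected_Ioo.image _ hcoe.continuousOn).subset_connectedComponentIn hc hgapP
  have ha_cl : (a : 𝕋) ∈ closure ((↑) '' Ioo a b) :=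
    image_closure_subset_closure_image hcoe ⟨a, by simp [closure_Ioo hab.ne, hab.le], rfl⟩
  exact ⟨c, hgapP hc, closure_mono hsub ha_cl, fun ha' => connectedComponentIn_subset _ _ ha' ha⟩

theorem endpointsSet_inter_subset_removedSet (f : 𝕋 → 𝕋) (P : Set 𝕋) :
    endpointsSet P ∩ P ⊆ removedSet f P := fun _ ⟨hθ, hθP⟩ =>
  ⟨mem_biUnion hθ (mem_iUnion_of_mem 0 (mem_iUnion_of_mem 0 rfl)), hθP⟩

theorem injOn_of_strictMonoOn_lift {h : 𝕋 → 𝕋} {H : ℝ → ℝ}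
    (hHd : ∀ x : ℝ, H (x + 1) = H x + 1) (hHlift : ∀ x : ℝ, h x = (H x : 𝕋)) {U : Set 𝕋}
    (hH : StrictMonoOn H ((↑) ⁻¹' U)) : InjOn h U := by
  intro θ₁ hθ₁ θ₂ hθ₂ hval
  by_contra hne
  obtain ⟨x₁, rfl⟩ := QuotientAddGroup.mk_surjective θ₁
  obtain ⟨⟨x₂, hx₂_mem⟩, hx₂⟩ : ∃ x : Ico x₁ (x₁ + 1), ((x : ℝ) : 𝕋) = θ₂ :=
    ⟨AddCircle.equivIco 1 x₁ θ₂, AddCircle.coe_equivIco⟩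
  subst hx₂
  have hlt : x₁ < x₂ := hx₂_mem.1.lt_of_ne fun heq => hne (congrArg _ heq)
  have hθ₁' : x₁ + 1 ∈ ((↑) ⁻¹' U : Set ℝ) := by
    simpa only [mem_preimage, AddCircle.coe_add_period] using hθ₁
  have hH₁ : H x₁ < H x₂ := hH hθ₁ hθ₂ hlt
  have hH₂ : H x₂ < H x₁ + 1 := hHd x₁ ▸ hH hθ₂ hθ₁' hx₂_mem.2
  obtain ⟨k, hk⟩ : ∃ k : ℤ, k • (1 : ℝ) = H x₂ - H x₁ := by
    rw [← AddCircle.coe_eq_zero_iff, AddCircle.coe_sub, ← hHlift, ← hHlift, hval, sub_self]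
  rw [zsmul_eq_mul, mul_one] at hk
  have hk₀ : (0 : ℤ) < k := by exact_mod_cast (by linarith : (0 : ℝ) < k)
  have hk₁ : k < 1 := by exact_mod_cast (by linarith : (k : ℝ) < 1)
  omega

section FlatArc

variable {f h : 𝕋 → 𝕋} {H : ℝ → ℝ} {ρ : ℝ} {P : Set 𝕋}

theorem coe_notMem_of_lift_eq_of_mem_Ioo (hf : Continuous f) (hHm : Monotone H)
    (hHlift : ∀ x : ℝ, h x = (H x : 𝕋)) (hsemi : Semiconj h f (· + (ρ : 𝕋)))
    (hρ : Irrational ρ) (hPinv : P ⊆ f '' P)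
    (hPmin : ∀ θ ∈ P, P ⊆ closure (range fun n => f^[n] θ)) {a b y : ℝ} (hab : H a = H b)
    (hy : y ∈ Ioo a b) : (y : 𝕋) ∉ P := by
  intro hyP
  have hflat : ∀ z ∈ Icc a b, h z = h a := fun z hz => by
    rw [hHlift, hHlift, le_antisymm (hab ▸ hHm hz.2) (hHm hz.1)]
  obtain ⟨q, hqP, hqy⟩ := hPinv hyP
  have hrec := mem_closure_range_iterate_succ hf (hPmin _ hyP hqP) hqy
  obtain ⟨_, ⟨t, ht, hteq⟩, n, rfl⟩ := mem_closure_iff.mp hrec _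
    (QuotientAddGroup.isOpenMap_coe _ isOpen_Ioo) ⟨y, hy, rfl⟩
  apply hsemi.apply_iterate_ne_of_irrational (by rwa [div_one]) n.succ_ne_zero (y : 𝕋)
  rw [show f^[n.succ] y = t from hteq.symm, hflat t (Ioo_subset_Icc_self ht),
    hflat y (Ioo_subset_Icc_self hy)]

theorem strictMonoOn_lift_preimage_diff_removedSet (hf : Continuous f) (hHm : Monotone H)
    (hHlift : ∀ x : ℝ, h x = (H x : 𝕋)) (hsemi : Semiconj h f (· + (ρ : 𝕋)))
    (hρ : Irrational ρ) (hPinv : P ⊆ f '' P)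
    (hPmin : ∀ θ ∈ P, P ⊆ closure (range fun n => f^[n] θ)) :
    StrictMonoOn H ((↑) ⁻¹' (P \ removedSet f P)) := by
  intro a ha b _ hab
  refine (hHm hab.le).lt_of_ne fun hHab => ha.2 ?_
  have hgap : ∀ y ∈ Ioo a b, (y : 𝕋) ∉ P := fun y hy =>
    coe_notMem_of_lift_eq_of_mem_Ioo hf hHm hHlift hsemi hρ hPinv hPmin hHab hy
  exact endpointsSet_inter_subset_removedSet f P
    ⟨coe_mem_endpointsSet_of_forall_Ioo_notMem hab hgap ha.1, ha.1⟩

end FlatArc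

theorem semiconjugacy_injective_on_U_general
    (f : AddCircle (1 : ℝ) → AddCircle (1 : ℝ)) (hf : Continuous f)
    (ρ : ℝ) (hρirr : Irrational ρ)
    (h : AddCircle (1 : ℝ) → AddCircle (1 : ℝ))
    (H : ℝ → ℝ) (hHm : Monotone H)
    (hHd : ∀ x : ℝ, H (x + 1) = H x + 1)
    (hHlift : ∀ x : ℝ, h (x : AddCircle (1 : ℝ)) = ((H x : ℝ) : AddCircle (1 : ℝ)))
    (hsemi : ∀ θ : AddCircle (1 : ℝ), h (f θ) = h θ + (ρ : AddCircle (1 : ℝ)))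
    (P : Set (AddCircle (1 : ℝ)))
    (hPinv : f '' P = P)
    (hPmin : ∀ θ ∈ P, P ⊆ closure (Set.range fun n : ℕ => f^[n] θ)) :
    Set.InjOn h (P \ removedSet f P) :=
  injOn_of_strictMonoOn_lift hHd hHlift
    (strictMonoOn_lift_preimage_diff_removedSet hf hHm hHlift hsemi hρirr hPinv.superset hPmin)

theorem semiconjugacy_injective_on_U
    (f : AddCircle (1 : ℝ) → AddCircle (1 : ℝ)) (hf : Continuous f)
    (F : ℝ → ℝ) (hFc : Continuous F) (hFm : Monotone F)
    (hFd : ∀ x : ℝ, F (x + 1) = F x + 1)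
    (hFlift : ∀ x : ℝ, f (x : AddCircle (1 : ℝ)) = ((F x : ℝ) : AddCircle (1 : ℝ)))
    (ρ : ℝ) (hρirr : Irrational ρ)
    (hρ : ∀ x : ℝ, Tendsto (fun n : ℕ => (F^[n] x - x) / n) atTop (nhds ρ))
    (h : AddCircle (1 : ℝ) → AddCircle (1 : ℝ)) (hh : Continuous h)
    (H : ℝ → ℝ) (hHc : Continuous H) (hHm : Monotone H)
    (hHd : ∀ x : ℝ, H (x + 1) = H x + 1)
    (hHlift : ∀ x : ℝ, h (x : AddCircle (1 : ℝ)) = ((H x : ℝ) : AddCircle (1 : ℝ)))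
    (hsemi : ∀ θ : AddCircle (1 : ℝ), h (f θ) = h θ + (ρ : AddCircle (1 : ℝ)))
    (P : Set (AddCircle (1 : ℝ))) (hPne : P.Nonempty) (hPcl : IsClosed P)
    (hPinv : f '' P = P)
    (hPmin : ∀ θ ∈ P, P ⊆ closure (Set.range fun n : ℕ => f^[n] θ)) :
    Set.InjOn h (P \ removedSet f P) :=
  semiconjugacy_injective_on_U_general f hf ρ hρirr h H hHm hHd hHlift hsemi P hPinv hPmin
end

section
/- Let f be a continuous circle map without periodic points with unique minimal set P, and let 𝒰ᶜ := (∪_{θ ∈ P̃} ∪_{n≥0} Orb⁻_f(fⁿ(θ))) ∩ P where P̃ is the set of endpoints of connected components of S¹ \ P, and 𝒰 := P \ 𝒰ᶜ. Then f(𝒰ᶜ) ⊂ 𝒰ᶜ, f⁻¹(θ) ∩ P ⊂ 𝒰ᶜ for every θ ∈ 𝒰ᶜ, and consequently f(𝒰) = 𝒰. -/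
/-! The removed set is `G ∩ P`, where `G`, the set of points whose forward orbit meets that of an
endpoint, is completely invariant: `f ⁻¹' G = G`. Intersecting a completely invariant set, or its
complement, with a set that `f` maps onto itself gives again a set that `f` maps onto itself. -/

def grandOrbit {α : Type*} (f : α → α) (S : Set α) : Set α :=
  {x | ∃ θ ∈ S, ∃ n m : ℕ, f^[m] x = f^[n] θ}

theorem preimage_grandOrbit {α : Type*} (f : α → α) (S : Set α) :
    f ⁻¹' grandOrbit f S = grandOrbit f S := by
  ext x
  constructor
  · rintro ⟨θ, hθ, n, m, hm⟩
    exact ⟨θ, hθ, n, m + 1, by rwa [Function.iterate_succ_apply]⟩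
  · rintro ⟨θ, hθ, n, m, hm⟩
    cases m with
    | zero => exact ⟨θ, hθ, n + 1, 0, by rw [Function.iterate_succ_apply', ← hm]; rfl⟩
    | succ m => exact ⟨θ, hθ, n, m, by rwa [← Function.iterate_succ_apply]⟩

section CompletelyInvariant

variable {α : Type*} {f : α → α} {A P : Set α}

theorem image_inter_eq_of_preimage_eq (hA : f ⁻¹' A = A) (hP : f '' P = P) :
    f '' (A ∩ P) = A ∩ P := by
  rw [← hA, Set.image_preimage_inter, hP, hA]

theorem image_sdiff_eq_of_preimage_eq (hA : f ⁻¹' A = A) (hP : f '' P = P) :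
    f '' (P \ A) = P \ A := by
  nth_rw 1 [← hA]
  rw [Set.image_sdiff_preimage, hP]

end CompletelyInvariant

theorem removedSet_eq_grandOrbit_inter (f : AddCircle (1 : ℝ) → AddCircle (1 : ℝ))
    (P : Set (AddCircle (1 : ℝ))) :
    removedSet f P = grandOrbit f (endpointsSet P) ∩ P := by
  ext x
  simp only [removedSet, backOrbit, grandOrbit, Set.mem_inter_iff, Set.mem_iUnion,
    Set.mem_preimage, Set.mem_singleton_iff, Set.mem_ofPred_eq, exists_prop]

theorem removedSet_invariance_general
    (f : AddCircle (1 : ℝ) → AddCircle (1 : ℝ))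
    (P : Set (AddCircle (1 : ℝ)))
    (hPinv : f '' P = P) :
    f '' removedSet f P ⊆ removedSet f P ∧
    (∀ θ ∈ removedSet f P, f ⁻¹' {θ} ∩ P ⊆ removedSet f P) ∧
    f '' (P \ removedSet f P) = P \ removedSet f P := by
  have hG := preimage_grandOrbit f (endpointsSet P)
  rw [removedSet_eq_grandOrbit_inter, Set.sdiff_inter_self_eq_sdiff]
  refine ⟨(image_inter_eq_of_preimage_eq hG hPinv).subset, ?_,
    image_sdiff_eq_of_preimage_eq hG hPinv⟩
  rintro θ ⟨hθ, -⟩ x ⟨hfx, hxP⟩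
  rw [Set.mem_preimage, Set.mem_singleton_iff] at hfx
  exact ⟨hG.subset (show f x ∈ _ from hfx ▸ hθ), hxP⟩

theorem removedSet_invariance
    (f : AddCircle (1 : ℝ) → AddCircle (1 : ℝ)) (hf : Continuous f)
    (hnoper : ¬ ∃ (θ : AddCircle (1 : ℝ)) (n : ℕ), 1 ≤ n ∧ f^[n] θ = θ)
    (P : Set (AddCircle (1 : ℝ))) (hPne : P.Nonempty) (hPcl : IsClosed P)
    (hPinv : f '' P = P)
    (hPmin : ∀ θ ∈ P, P ⊆ closure (Set.range fun n : ℕ => f^[n] θ)) :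
    f '' removedSet f P ⊆ removedSet f P ∧
    (∀ θ ∈ removedSet f P, f ⁻¹' {θ} ∩ P ⊆ removedSet f P) ∧
    f '' (P \ removedSet f P) = P \ removedSet f P :=
  removedSet_invariance_general f P hPinv
end
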